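/- arXiv:1503.00892 — 2 statements merged into one kernel-verified Lean document; each statement's English description precedes it below -/
import Mathlib

section
/- Suppose that 𝒜 satisfies the dominated splitting condition and Φ satisfies the strong separation condition. Then for every x ∈ Λ, every i ∈ Σ⁺ and every δ > 0, writing j for the unique symbol with x ∈ f_j(Λ) and x' = f_j⁻¹(x), one has μ(B^T_δ(x,i) ∩ f_j(Λ)) = p_j · μ(B^T_{δ/‖A_j|e_s(x')‖}(x', ji)), where ji ∈ Σ⁺ is the concatenation of the symbol j with i, and ‖A|ℓ‖ = |Av| for a unit vector v spanning the line ℓ. -/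
open MeasureTheory Filter Metric Set
open scoped ENNReal Topology NNReal

noncomputable section

/-- The Euclidean plane. -/
abbrev E2 := EuclideanSpace ℝ (Fin 2)

/-- View a vector `Fin 2 → ℝ` as a point of the Euclidean plane. -/
def toE2 (v : Fin 2 → ℝ) : E2 := WithLp.toLp 2 v

/-- The largest singular value `α₁(B)` of a `2×2` real matrix, i.e. the operator norm of the
induced linear map on the Euclidean plane. -/
noncomputable def alpha1 (B : Matrix (Fin 2) (Fin 2) ℝ) : ℝ :=
  ‖LinearMap.toContinuousLinearMap (Matrix.toEuclideanLin B)‖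

/-- The smallest singular value `α₂(B)` of a `2×2` real matrix; for a non-singular `2×2`
matrix one has `α₁(B) * α₂(B) = |det B|`. -/
noncomputable def alpha2 (B : Matrix (Fin 2) (Fin 2) ℝ) : ℝ :=
  |B.det| / alpha1 B

/-- Product `A_{w₁} ⋯ A_{wₙ}` of matrices along a finite word `w`. -/
def listProd {N : ℕ} (A : Fin N → Matrix (Fin 2) (Fin 2) ℝ) (w : List (Fin N)) :
    Matrix (Fin 2) (Fin 2) ℝ :=
  (w.map A).prod

/-- `A_{x₀} A_{x₁} ⋯ A_{x_{n-1}}` along an infinite word `x`. -/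
def prodA {N : ℕ} (A : Fin N → Matrix (Fin 2) (Fin 2) ℝ) (x : ℕ → Fin N) (n : ℕ) :
    Matrix (Fin 2) (Fin 2) ℝ :=
  listProd A ((List.range n).map x)

/-- `A_{x_{n-1}} ⋯ A_{x₁} A_{x₀}` along an infinite word `x` (forward dynamical order). -/
def prodRev {N : ℕ} (A : Fin N → Matrix (Fin 2) (Fin 2) ℝ) (x : ℕ → Fin N) (n : ℕ) :
    Matrix (Fin 2) (Fin 2) ℝ :=
  listProd A (((List.range n).reverse).map x)

/-- The dominated splitting condition: `α₁/α₂ ≥ C e^{δ n}` for all words of length `n`. -/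
def DominatedSplitting {N : ℕ} (A : Fin N → Matrix (Fin 2) (Fin 2) ℝ) : Prop :=
  ∃ C > (0:ℝ), ∃ δ > (0:ℝ), ∀ w : List (Fin N),
    C * Real.exp (δ * w.length) ≤ alpha1 (listProd A w) / alpha2 (listProd A w)

/-- The affine map `x ↦ A_i x + t_i`. -/
def affIFS {N : ℕ} (A : Fin N → Matrix (Fin 2) (Fin 2) ℝ) (t : Fin N → E2)
    (i : Fin N) (x : E2) : E2 :=
  toE2 ((A i).mulVec x) + t i

/-- Composition `f_{w₁} ∘ ⋯ ∘ f_{wₙ}` along a finite word. -/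
def mapWord {N : ℕ} (f : Fin N → E2 → E2) (w : List (Fin N)) : E2 → E2 :=
  w.foldr (fun i g => f i ∘ g) id

/-- The strong separation condition for an IFS on the plane. -/
def SSC {N : ℕ} (f : Fin N → E2 → E2) : Prop :=
  ∃ O : Set E2, IsOpen O ∧ O.Nonempty ∧ Bornology.IsBounded O ∧
    (∀ i, f i '' closure O ⊆ O) ∧
    Pairwise fun i j => Disjoint (f i '' closure O) (f j '' closure O)

/-- `Λ` is the attractor of the IFS `f`: the (unique) nonempty compact set with
`Λ = ⋃ i f_i(Λ)`. -/
def IsAttractor {N : ℕ} (f : Fin N → E2 → E2) (Λ : Set E2) : Prop :=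
  IsCompact Λ ∧ Λ.Nonempty ∧ Λ = ⋃ i, f i '' Λ

/-- The natural projection `π₊(i) = ∑ₙ A_{i₀}⋯A_{i_{n-1}} t_{iₙ} = lim f_{i₀}∘⋯∘f_{iₙ}(0)`. -/
noncomputable def piPlus {N : ℕ} (A : Fin N → Matrix (Fin 2) (Fin 2) ℝ)
    (t : Fin N → E2) (x : ℕ → Fin N) : E2 :=
  ∑' n, toE2 ((prodA A x n).mulVec (t (x n)))

/-- `ν` is the Bernoulli product measure with marginal `p` on `Σ⁺ = {1,…,N}^ℕ`,
characterized by its values on cylinder sets. -/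
def IsBernoulli {N : ℕ} (p : Fin N → ℝ) (ν : Measure (ℕ → Fin N)) : Prop :=
  ∀ (n : ℕ) (w : Fin n → Fin N),
    ν {x | ∀ k : Fin n, x k.val = w k} = ∏ k, ENNReal.ofReal (p (w k))

/-- The entropy `h_ν = -∑ p_i log p_i` of the Bernoulli measure with marginal `p`. -/
noncomputable def entropy {N : ℕ} (p : Fin N → ℝ) : ℝ := -∑ i, p i * Real.log (p i)

/-- The Hausdorff dimension of a measure: `dim_H m = inf { dim_H s : m(sᶜ) = 0 }`. -/
noncomputable def mdimH {X : Type*} [EMetricSpace X] {mX : MeasurableSpace X}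
    (m : Measure X) : ℝ≥0∞ :=
  ⨅ (s : Set X) (_ : m sᶜ = 0), dimH s

/-- A measure is exact dimensional with dimension `d` if the local dimension
`lim_{r→0⁺} log m(B_r(x)) / log r` exists and equals `d` at `m`-a.e. point. -/
def IsExactDimensional {X : Type*} [PseudoMetricSpace X] {mX : MeasurableSpace X}
    (m : Measure X) (d : ℝ) : Prop :=
  ∀ᵐ z ∂m, Tendsto (fun r : ℝ => Real.log (m (Metric.ball z r)).toReal / Real.log r)
    (𝓝[>] (0:ℝ)) (𝓝 d)

/-- `χs ≤ χss` are the Lyapunov exponents of `(A, ν)`: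
`(1/n) log α₁(A_{x₀}⋯A_{x_{n-1}}) → -χs` and `(1/n) log α₂(A_{x₀}⋯A_{x_{n-1}}) → -χss`
for `ν`-a.e. `x`. -/
def LyapunovExponents {N : ℕ} (A : Fin N → Matrix (Fin 2) (Fin 2) ℝ)
    (ν : Measure (ℕ → Fin N)) (χs χss : ℝ) : Prop :=
  0 < χs ∧ χs ≤ χss ∧
  (∀ᵐ x ∂ν, Tendsto (fun n : ℕ => Real.log (alpha1 (prodA A x n)) / n) atTop (𝓝 (-χs))) ∧
  (∀ᵐ x ∂ν, Tendsto (fun n : ℕ => Real.log (alpha2 (prodA A x n)) / n) atTop (𝓝 (-χss)))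

/-- The Lyapunov dimension `min {2, h/χs, 1 + (h - χs)/χss}`. -/
noncomputable def dimLyap {N : ℕ} (p : Fin N → ℝ) (χs χss : ℝ) : ℝ :=
  min 2 (min (entropy p / χs) (1 + (entropy p - χs) / χss))

/-- Left shift on `Σ⁺`. -/
def shift {N : ℕ} (x : ℕ → Fin N) : ℕ → Fin N := fun n => x (n + 1)

/-- `ess` is the family of strong-stable directions of `A`: a family of lines,
equivariant (`A_{x₀} e_ss(x) = e_ss(σx)`), along which the products `A_{x_{n-1}}⋯A_{x₀}`
contract at a rate exponentially faster than `α₁`; this characterizes the strong-stable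
directions `e_ss(x) = ⋂ₙ A_{x₀}⁻¹⋯A_{x_{n-1}}⁻¹(cl Mᶜ)` obtained from a forward-invariant
multicone `M` under the dominated splitting condition. -/
def IsStrongStableDirections {N : ℕ} (A : Fin N → Matrix (Fin 2) (Fin 2) ℝ)
    (ess : (ℕ → Fin N) → Submodule ℝ E2) : Prop :=
  (∀ x, Module.finrank ℝ (ess x) = 1) ∧
  (∀ x, Submodule.map (Matrix.toEuclideanLin (A (x 0))) (ess x) = ess (shift x)) ∧
  ∃ C > (0:ℝ), ∃ δ > (0:ℝ), ∀ (x : ℕ → Fin N) (n : ℕ), ∀ v ∈ ess x,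
    ‖toE2 ((prodRev A x n).mulVec v)‖ ≤ C * Real.exp (-δ * n) * alpha1 (prodRev A x n) * ‖v‖

/-- Orthogonal projection of the plane onto the line through the origin
perpendicular to the line `ℓ`. -/
noncomputable def projPerp (ℓ : Submodule ℝ E2) (v : E2) : E2 :=
  (ℓᗮ.orthogonalProjectionOnto v : E2)

/-- The unit vector with angle `θ`. -/
noncomputable def dirVec (θ : ℝ) : E2 := toE2 ![Real.cos θ, Real.sin θ]

/-- The line through the origin with angle `θ`;
angles in `[0,π)` parametrize the projective space `P¹`. -/
noncomputable def lineOf (θ : ℝ) : Submodule ℝ E2 := Submodule.span ℝ {dirVec θ}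

/-- The standard positive cone `{(x,y) ≠ 0 : xy ≥ 0}`. -/
def StdPosCone : Set E2 := {v | v ≠ 0 ∧ 0 ≤ v 0 * v 1}

/-- A multicone: a finite disjoint union of cones (images of the standard positive cone
under linear isomorphisms). -/
def IsMulticone (M : Set E2) : Prop :=
  ∃ (k : ℕ) (T : Fin k → E2 ≃ₗ[ℝ] E2),
    M = (⋃ j, T j '' StdPosCone) ∧
    Pairwise fun j j' => Disjoint (T j '' StdPosCone) ((T j') '' StdPosCone)

/-- The backward non-overlapping condition: the inverse matrices map the interior of some
multicone `M` into itself with pairwise disjoint images. -/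
def BackwardNonOverlapping {N : ℕ} (A : Fin N → Matrix (Fin 2) (Fin 2) ℝ) : Prop :=
  ∃ M : Set E2, IsMulticone M ∧
    (∀ i, (fun (v : E2) => toE2 ((A i)⁻¹.mulVec v)) '' interior M ⊆ interior M) ∧
    Pairwise fun i j => Disjoint ((fun (v : E2) => toE2 ((A i)⁻¹.mulVec v)) '' interior M)
      ((fun (v : E2) => toE2 ((A j)⁻¹.mulVec v)) '' interior M)

/-- `es` is the family of stable directions on the attractor `Λ`: a family of lines,
equivariant (`e_s(f_j x) = A_j e_s(x)`), along which products of the matrices contract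
no faster (up to a constant) than `α₁`; this characterizes the stable directions
`e_s(x) = ⋂ₙ A_{i₋₁}⋯A_{i₋ₙ}(M)` given by the backward coding of `x ∈ Λ`. -/
def IsStableDirections {N : ℕ} (A : Fin N → Matrix (Fin 2) (Fin 2) ℝ)
    (f : Fin N → E2 → E2) (Λ : Set E2) (es : E2 → Submodule ℝ E2) : Prop :=
  (∀ x ∈ Λ, Module.finrank ℝ (es x) = 1) ∧
  (∀ j, ∀ x ∈ Λ, Submodule.map (Matrix.toEuclideanLin (A j)) (es x) = es (f j x)) ∧
  ∃ c > (0:ℝ), ∀ x ∈ Λ, ∀ w : List (Fin N), ∀ v ∈ es x,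
    c * alpha1 (listProd A w) * ‖v‖ ≤ ‖toE2 ((listProd A w).mulVec v)‖

/-- The norm `‖B|ℓ‖ = |Bv|` of a matrix restricted to a line `ℓ` (`v` a unit vector
spanning `ℓ`). -/
noncomputable def normOnLine (B : Matrix (Fin 2) (Fin 2) ℝ) (ℓ : Submodule ℝ E2) : ℝ :=
  sSup {r : ℝ | ∃ v ∈ ℓ, ‖v‖ = 1 ∧ r = ‖toE2 (B.mulVec v)‖}

/-- The modified transversal ball `B^T_δ(x,i)`: the set of `z ∈ Λ` such that the
intersection points of the lines `l_ss(x,i) = x + e_ss(i)` and `l_ss(z,i) = z + e_ss(i)`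
with the line `e_s(x)` through the origin are at distance at most `δ`. -/
def transBall {N : ℕ} (Λ : Set E2) (ess : (ℕ → Fin N) → Submodule ℝ E2)
    (es : E2 → Submodule ℝ E2) (δ : ℝ) (x : E2) (i : ℕ → Fin N) : Set E2 :=
  {z | z ∈ Λ ∧ ∃ w₁ w₂ : E2, w₁ ∈ es x ∧ w₂ ∈ es x ∧
    w₁ - x ∈ ess i ∧ w₂ - z ∈ ess i ∧ ‖w₁ - w₂‖ ≤ δ}

/-- Prepend a symbol to an infinite word. -/
def consW {N : ℕ} (j : Fin N) (i : ℕ → Fin N) : ℕ → Fin N :=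
  fun n => match n with
  | 0 => j
  | Nat.succ k => i k


/-!
Under the strong separation condition a coding `x` with `π₊ x ∈ f_j(Λ)` must begin with `j`,
and `f_j` is injective, so `π₊⁻¹(f_j S) = σ⁻¹(π₊⁻¹ S) ∩ [j]` for `S ⊆ Λ`. As `ν` is Bernoulli,
restricting it to `[j]` and pushing forward by the shift gives `p_j ν`; hence
`μ(f_j S) = p_j μ(S)`. It remains to see that
`B^T_δ(f_j x', i) ∩ f_j(Λ) = f_j(B^T_{δ/‖A_j|e_s(x')‖}(x', ji))`. A modified transversal ball is
a sublevel set of the distance between projections onto `e_s` along `e_ss`, and the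
equivariance of both line fields makes `f_j` intertwine the projection at `(x', ji)` with the one
at `(f_j x', i)`, multiplying distances along `e_s(x')` by `‖A_j|e_s(x')‖`.
-/

open Matrix

section Operators

variable {N : ℕ} {A : Fin N → Matrix (Fin 2) (Fin 2) ℝ} {t : Fin N → E2}

lemma toE2_mulVec (B : Matrix (Fin 2) (Fin 2) ℝ) (v : E2) :
    toE2 (B.mulVec v) = toEuclideanCLM (𝕜 := ℝ) B v := rfl

lemma alpha1_eq_norm (B : Matrix (Fin 2) (Fin 2) ℝ) :
    alpha1 B = ‖toEuclideanCLM (𝕜 := ℝ) B‖ := rfl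

lemma affIFS_apply (i : Fin N) (x : E2) :
    affIFS A t i x = toEuclideanCLM (𝕜 := ℝ) (A i) x + t i := rfl

lemma affIFS_sub_affIFS (i : Fin N) (x y : E2) :
    affIFS A t i x - affIFS A t i y = toEuclideanCLM (𝕜 := ℝ) (A i) (x - y) := by
  rw [affIFS_apply, affIFS_apply, add_sub_add_right_eq_sub, map_sub]

lemma toEuclideanCLM_injective_of_det_ne_zero {B : Matrix (Fin 2) (Fin 2) ℝ} (hB : B.det ≠ 0) :
    Function.Injective (toEuclideanCLM (𝕜 := ℝ) B) := by
  intro v w h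
  have hmul := mulVec_injective_iff_isUnit.2 ((isUnit_iff_isUnit_det B).2 hB.isUnit)
  exact WithLp.ofLp_injective 2 (hmul (congrArg WithLp.ofLp h))

lemma alpha1_pos_of_det_ne_zero {B : Matrix (Fin 2) (Fin 2) ℝ} (hB : B.det ≠ 0) :
    0 < alpha1 B := by
  rw [alpha1_eq_norm, norm_pos_iff, Ne, EmbeddingLike.map_eq_zero_iff]
  rintro rfl
  simp at hB

lemma det_listProd_ne_zero (hA : ∀ i, (A i).det ≠ 0) (w : List (Fin N)) :
    (listProd A w).det ≠ 0 := by
  induction w with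
  | nil => simp [listProd]
  | cons i w ih => simpa [listProd] using ⟨hA i, ih⟩

lemma alpha1_listProd_le {a : ℝ≥0} (ha : ∀ i, alpha1 (A i) ≤ a) (w : List (Fin N)) :
    alpha1 (listProd A w) ≤ a ^ w.length := by
  induction w with
  | nil => simp [listProd, alpha1_eq_norm]
  | cons i w ih =>
    calc alpha1 (listProd A (i :: w)) ≤ alpha1 (A i) * alpha1 (listProd A w) := by
          simpa [listProd, alpha1_eq_norm] using norm_mul_le _ _
      _ ≤ a * a ^ w.length := mul_le_mul (ha i) ih (norm_nonneg _) a.2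
      _ = a ^ (i :: w).length := by simp [pow_succ']

lemma exists_alpha1_le_of_lt_one {ι : Type*} [Fintype ι] {B : ι → Matrix (Fin 2) (Fin 2) ℝ}
    (hB : ∀ i, alpha1 (B i) < 1) : ∃ a : ℝ≥0, a < 1 ∧ ∀ i, alpha1 (B i) ≤ a := by
  refine ⟨Finset.univ.sup fun i => ‖toEuclideanCLM (𝕜 := ℝ) (B i)‖₊,
    (Finset.sup_lt_iff zero_lt_one).2 fun i _ => ?_, fun i => ?_⟩
  · exact_mod_cast hB i
  · exact_mod_cast Finset.le_sup (f := fun i => ‖toEuclideanCLM (𝕜 := ℝ) (B i)‖₊)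
      (Finset.mem_univ i)

lemma lipschitzWith_affIFS {a : ℝ≥0} (ha : ∀ i, alpha1 (A i) ≤ a) (i : Fin N) :
    LipschitzWith a (affIFS A t i) := by
  refine LipschitzWith.of_dist_le_mul fun x y => ?_
  rw [dist_eq_norm, dist_eq_norm, affIFS_sub_affIFS]
  exact (ContinuousLinearMap.le_opNorm _ _).trans
    (mul_le_mul_of_nonneg_right (ha i) (norm_nonneg _))

end Operators

section Contraction

variable {X ι : Type*} [MetricSpace X] [ProperSpace X]

lemma infDist_le_mul_infDist_of_mapsTo {f : X → X} {a : ℝ≥0} (hf : LipschitzWith a f)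
    {K : Set X} (hK : IsClosed K) (hKne : K.Nonempty) (hfK : MapsTo f K K) (x : X) :
    infDist (f x) K ≤ a * infDist x K := by
  obtain ⟨k, hk, hxk⟩ := hK.exists_infDist_eq_dist hKne x
  rw [hxk]
  exact (infDist_le_dist_of_mem (hfK hk)).trans (hf.dist_le_mul x k)

lemma subset_of_subset_iUnion_image {f : ι → X → X} {a : ℝ≥0} (ha : a < 1)
    (hf : ∀ i, LipschitzWith a (f i)) {K : Set X} (hK : IsClosed K) (hKne : K.Nonempty)
    (hfK : ∀ i, MapsTo (f i) K K) {S : Set X} (hS : Bornology.IsBounded S)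
    (hSf : S ⊆ ⋃ i, f i '' S) : S ⊆ K := by
  obtain ⟨k₀, hk₀⟩ := hKne
  obtain ⟨R, hR⟩ := hS.subset_closedBall k₀
  -- each step back along the covering shrinks the distance to `K` by the factor `a`
  have hbound : ∀ n : ℕ, ∀ z ∈ S, infDist z K ≤ a ^ n * R := by
    intro n
    induction n with
    | zero =>
      intro z hz
      simpa using (infDist_le_dist_of_mem hk₀).trans (mem_closedBall.1 (hR hz))
    | succ n ih =>
      intro z hz
      obtain ⟨i, y, hy, rfl⟩ := mem_iUnion.1 (hSf hz)
      calc infDist (f i y) K ≤ a * infDist y K :=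
            infDist_le_mul_infDist_of_mapsTo (hf i) hK ⟨k₀, hk₀⟩ (hfK i) y
        _ ≤ a * (a ^ n * R) := mul_le_mul_of_nonneg_left (ih y hy) a.2
        _ = a ^ (n + 1) * R := by ring
  intro z hz
  have hlim : Tendsto (fun n : ℕ => (a : ℝ) ^ n * R) atTop (𝓝 0) := by
    simpa using (tendsto_pow_atTop_nhds_zero_of_lt_one a.2 ha).mul_const R
  refine (hK.mem_iff_infDist_zero ⟨k₀, hk₀⟩).2 (le_antisymm ?_ infDist_nonneg)
  exact ge_of_tendsto' hlim fun n => hbound n z hz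

end Contraction

lemma DependsOn.measurable {ι α β : Type*} [MeasurableSpace α] [Countable α]
    [MeasurableSingletonClass α] [MeasurableSpace β] [Nonempty β] {f : (ι → α) → β}
    {s : Set ι} (hs : s.Finite) (hf : DependsOn f s) : Measurable f := by
  obtain ⟨g, rfl⟩ := dependsOn_iff_exists_comp.1 hf
  have : Finite s := hs
  exact (measurable_of_countable g).comp (measurable_restrict s)

section CodingMap

variable {N : ℕ} {A : Fin N → Matrix (Fin 2) (Fin 2) ℝ} {t : Fin N → E2} {a : ℝ≥0}

def piPlusTerm (A : Fin N → Matrix (Fin 2) (Fin 2) ℝ) (t : Fin N → E2) (x : ℕ → Fin N)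
    (n : ℕ) : E2 :=
  toE2 ((prodA A x n).mulVec (t (x n)))

lemma piPlus_eq_tsum (x : ℕ → Fin N) : piPlus A t x = ∑' n, piPlusTerm A t x n := rfl

lemma prodA_succ (x : ℕ → Fin N) (n : ℕ) :
    prodA A x (n + 1) = A (x 0) * prodA A (shift x) n := by
  simp [prodA, listProd, List.range_succ_eq_map, shift, Function.comp_def]

lemma piPlusTerm_zero (x : ℕ → Fin N) : piPlusTerm A t x 0 = t (x 0) := by
  simp [piPlusTerm, prodA, listProd, toE2]

lemma piPlusTerm_succ (x : ℕ → Fin N) (n : ℕ) :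
    piPlusTerm A t x (n + 1) =
      toEuclideanCLM (𝕜 := ℝ) (A (x 0)) (piPlusTerm A t (shift x) n) := by
  simp only [piPlusTerm, prodA_succ, toE2_mulVec, map_mul]
  rfl

lemma norm_piPlusTerm_le (ha : ∀ i, alpha1 (A i) ≤ a) (x : ℕ → Fin N) (n : ℕ) :
    ‖piPlusTerm A t x n‖ ≤ a ^ n * ∑ i, ‖t i‖ :=
  calc ‖piPlusTerm A t x n‖ ≤ alpha1 (prodA A x n) * ‖t (x n)‖ :=
        (toEuclideanCLM (𝕜 := ℝ) (prodA A x n)).le_opNorm (t (x n))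
    _ ≤ a ^ n * ∑ i, ‖t i‖ := by
        refine mul_le_mul ?_ ?_ (norm_nonneg _) (pow_nonneg a.2 n)
        · simpa [prodA] using alpha1_listProd_le ha ((List.range n).map x)
        · exact Finset.single_le_sum (fun i _ => norm_nonneg (t i)) (Finset.mem_univ _)

lemma summable_piPlusTerm (ha : ∀ i, alpha1 (A i) ≤ a) (ha1 : a < 1) (x : ℕ → Fin N) :
    Summable (piPlusTerm A t x) :=
  Summable.of_norm_bounded ((summable_geometric_of_lt_one a.2 ha1).mul_right _)
    (norm_piPlusTerm_le ha x)

lemma piPlus_eq_affIFS_piPlus_shift (ha : ∀ i, alpha1 (A i) ≤ a) (ha1 : a < 1)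
    (x : ℕ → Fin N) : piPlus A t x = affIFS A t (x 0) (piPlus A t (shift x)) := by
  rw [piPlus_eq_tsum, (summable_piPlusTerm ha ha1 x).tsum_eq_zero_add, piPlusTerm_zero,
    affIFS_apply, piPlus_eq_tsum, ContinuousLinearMap.map_tsum _ (summable_piPlusTerm ha ha1 _),
    add_comm]
  simp only [piPlusTerm_succ]

lemma isBounded_range_piPlus (ha : ∀ i, alpha1 (A i) ≤ a) (ha1 : a < 1) :
    Bornology.IsBounded (range (piPlus A t)) :=
  isBounded_iff_forall_norm_le.2 ⟨_, forall_mem_range.2 fun x =>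
    tsum_of_norm_bounded ((hasSum_geometric_of_lt_one a.2 ha1).mul_right _)
      (norm_piPlusTerm_le ha x)⟩

lemma dependsOn_piPlusTerm (n : ℕ) :
    DependsOn (fun x : ℕ → Fin N => piPlusTerm A t x n) (Iic n) := by
  intro x y hxy
  have hmap : (List.range n).map x = (List.range n).map y :=
    List.map_congr_left fun m hm => hxy m (List.mem_range.1 hm).le
  simp only [piPlusTerm, prodA, hmap, hxy n (mem_Iic.2 le_rfl)]

lemma measurable_piPlus (ha : ∀ i, alpha1 (A i) ≤ a) (ha1 : a < 1) :
    Measurable (piPlus A t) := by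
  refine measurable_of_tendsto_metrizable
    (f := fun n x => ∑ k ∈ Finset.range n, piPlusTerm A t x k)
    (fun n => Finset.measurable_sum _ fun k _ =>
      (dependsOn_piPlusTerm k).measurable (finite_Iic k))
    (tendsto_pi_nhds.2 fun x => (summable_piPlusTerm ha ha1 x).hasSum.tendsto_sum_nat)

end CodingMap

section Bernoulli

variable {N : ℕ}

lemma measurable_shift : Measurable (shift : (ℕ → Fin N) → ℕ → Fin N) :=
  measurable_pi_lambda _ fun n => measurable_pi_apply (n + 1)

def wordCylinder {n : ℕ} (w : Fin n → Fin N) : Set (ℕ → Fin N) := {x | ∀ k : Fin n, x k = w k}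

def wordCylinders (N : ℕ) : Set (Set (ℕ → Fin N)) :=
  {S | ∃ (n : ℕ) (w : Fin n → Fin N), S = wordCylinder w}

lemma wordCylinder_elim0 : wordCylinder (Fin.elim0 : Fin 0 → Fin N) = univ := by
  simp [wordCylinder]

lemma measurableSet_wordCylinder {n : ℕ} (w : Fin n → Fin N) :
    MeasurableSet (wordCylinder w) := by
  simp only [wordCylinder, ofPred_forall]
  exact MeasurableSet.iInter fun k => measurableSet_eq_fun (measurable_pi_apply _) measurable_const

lemma wordCylinder_inter_of_le {n m : ℕ} (hnm : n ≤ m) (w : Fin n → Fin N) (v : Fin m → Fin N)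
    (hne : (wordCylinder w ∩ wordCylinder v).Nonempty) :
    wordCylinder w ∩ wordCylinder v = wordCylinder v := by
  obtain ⟨x, hxw, hxv⟩ := hne
  refine inter_eq_self_of_subset_right fun y hy k => ?_
  have hk : (k : ℕ) < m := k.2.trans_le hnm
  rw [hy ⟨k, hk⟩, ← hxv ⟨k, hk⟩, hxw k]

lemma isPiSystem_wordCylinders : IsPiSystem (wordCylinders N) := by
  rintro _ ⟨n, w, rfl⟩ _ ⟨m, v, rfl⟩ hne
  rcases le_total n m with h | h
  · exact ⟨m, v, wordCylinder_inter_of_le h w v hne⟩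
  · rw [inter_comm] at hne ⊢
    exact ⟨n, w, wordCylinder_inter_of_le h v w hne⟩

lemma preimage_eval_eq_iUnion_wordCylinder (k : ℕ) (j : Fin N) :
    (fun x : ℕ → Fin N => x k) ⁻¹' {j} =
      ⋃ (w : Fin (k + 1) → Fin N) (_ : w (Fin.last k) = j), wordCylinder w := by
  ext x
  simp only [mem_preimage, mem_singleton_iff, mem_iUnion, exists_prop]
  refine ⟨fun hx => ⟨fun m => x m, hx, fun m => rfl⟩, ?_⟩
  rintro ⟨w, rfl, hxw⟩
  exact hxw (Fin.last k)

lemma generateFrom_wordCylinders :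
    (MeasurableSpace.pi : MeasurableSpace (ℕ → Fin N)) =
      MeasurableSpace.generateFrom (wordCylinders N) := by
  refine le_antisymm (iSup_le fun k => Measurable.comap_le ?_)
    (MeasurableSpace.generateFrom_le ?_)
  · refine @measurable_to_countable' _ _ _ _ (.generateFrom _) _ fun j => ?_
    rw [preimage_eval_eq_iUnion_wordCylinder]
    exact .iUnion fun w => .iUnion fun _ =>
      MeasurableSpace.measurableSet_generateFrom ⟨k + 1, w, rfl⟩
  · rintro _ ⟨n, w, rfl⟩
    exact measurableSet_wordCylinder w

lemma preimage_shift_wordCylinder_inter {n : ℕ} (w : Fin n → Fin N) (j : Fin N) :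
    shift ⁻¹' wordCylinder w ∩ {x | x 0 = j} = wordCylinder (Fin.cons j w) := by
  ext x
  simp only [mem_inter_iff, mem_preimage, wordCylinder, mem_ofPred_eq, Fin.forall_fin_succ,
    Fin.val_zero, Fin.cons_zero, Fin.val_succ, Fin.cons_succ, shift]
  exact and_comm

variable {p : Fin N → ℝ} {ν : Measure (ℕ → Fin N)}

lemma IsBernoulli.measure_wordCylinder (hber : IsBernoulli p ν) {n : ℕ} (w : Fin n → Fin N) :
    ν (wordCylinder w) = ∏ k, ENNReal.ofReal (p (w k)) :=
  hber n w

lemma IsBernoulli.isProbabilityMeasure (hber : IsBernoulli p ν) : IsProbabilityMeasure ν := by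
  exact ⟨by simpa [wordCylinder_elim0] using hber.measure_wordCylinder Fin.elim0⟩

lemma IsBernoulli.map_shift_restrict (hber : IsBernoulli p ν) (j : Fin N) :
    (ν.restrict {x | x 0 = j}).map shift = ENNReal.ofReal (p j) • ν := by
  have := hber.isProbabilityMeasure
  have hcyl : ∀ {n : ℕ} (w : Fin n → Fin N),
      (ν.restrict {x | x 0 = j}).map shift (wordCylinder w) =
        ENNReal.ofReal (p j) * ν (wordCylinder w) := by
    intro n w
    rw [Measure.map_apply measurable_shift (measurableSet_wordCylinder w),
      Measure.restrict_apply (measurable_shift (measurableSet_wordCylinder w)),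
      preimage_shift_wordCylinder_inter, hber.measure_wordCylinder, hber.measure_wordCylinder,
      Fin.prod_univ_succ]
    simp
  refine ext_of_generate_finite _ generateFrom_wordCylinders isPiSystem_wordCylinders ?_ ?_
  · rintro _ ⟨n, w, rfl⟩
    exact hcyl w
  · simpa [wordCylinder_elim0] using hcyl (Fin.elim0 : Fin 0 → Fin N)

end Bernoulli

section SelfAffine

variable {N : ℕ} {A : Fin N → Matrix (Fin 2) (Fin 2) ℝ} {t : Fin N → E2} {Λ : Set E2}

lemma affIFS_injective {i : Fin N} (hA : (A i).det ≠ 0) : Function.Injective (affIFS A t i) :=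
  fun _ _ h => toEuclideanCLM_injective_of_det_ne_zero hA (add_right_cancel h)

lemma IsAttractor.mapsTo (hΛ : IsAttractor (affIFS A t) Λ) (i : Fin N) :
    MapsTo (affIFS A t i) Λ Λ := fun _ hz => hΛ.2.2 ▸ mem_iUnion.2 ⟨i, mem_image_of_mem _ hz⟩

lemma preimage_piPlus_image_affIFS (hA : ∀ i, alpha1 (A i) < 1 ∧ (A i).det ≠ 0)
    (hΛ : IsAttractor (affIFS A t) Λ) (hssc : SSC (affIFS A t)) (j : Fin N) {S : Set E2}
    (hS : S ⊆ Λ) :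
    piPlus A t ⁻¹' (affIFS A t j '' S) = shift ⁻¹' (piPlus A t ⁻¹' S) ∩ {x | x 0 = j} := by
  obtain ⟨a, ha1, ha⟩ := exists_alpha1_le_of_lt_one fun i => (hA i).1
  obtain ⟨O, -, hOne, -, hOf, hOdisj⟩ := hssc
  have hcover {T : Set E2} : Bornology.IsBounded T → T ⊆ ⋃ i, affIFS A t i '' T →
      T ⊆ closure O :=
    subset_of_subset_iUnion_image ha1 (lipschitzWith_affIFS ha) isClosed_closure hOne.closure
      fun i z hz => subset_closure (hOf i (mem_image_of_mem _ hz))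
  have hΛO : Λ ⊆ closure O := hcover hΛ.1.isBounded hΛ.2.2.subset
  have hπO : range (piPlus A t) ⊆ closure O := by
    refine hcover (isBounded_range_piPlus ha ha1) ?_
    rintro _ ⟨x, rfl⟩
    rw [piPlus_eq_affIFS_piPlus_shift ha ha1]
    exact mem_iUnion.2 ⟨x 0, _, mem_range_self _, rfl⟩
  ext x
  simp only [mem_preimage, mem_image, mem_inter_iff, mem_ofPred_eq]
  rw [piPlus_eq_affIFS_piPlus_shift ha ha1 x]
  constructor
  · rintro ⟨y, hy, hyx⟩
    obtain rfl : x 0 = j := by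
      by_contra hne
      exact disjoint_left.1 (hOdisj hne) (mem_image_of_mem _ (hπO (mem_range_self _)))
        ⟨y, hΛO (hS hy), hyx⟩
    exact ⟨affIFS_injective (hA _).2 hyx ▸ hy, rfl⟩
  · rintro ⟨hx, rfl⟩
    exact ⟨_, hx, rfl⟩

lemma map_piPlus_image_affIFS {p : Fin N → ℝ} {ν : Measure (ℕ → Fin N)}
    (hA : ∀ i, alpha1 (A i) < 1 ∧ (A i).det ≠ 0) (hΛ : IsAttractor (affIFS A t) Λ)
    (hssc : SSC (affIFS A t)) (hber : IsBernoulli p ν) (j : Fin N) {S : Set E2}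
    (hSc : IsClosed S) (hS : S ⊆ Λ) :
    ν.map (piPlus A t) (affIFS A t j '' S) = ENNReal.ofReal (p j) * ν.map (piPlus A t) S := by
  obtain ⟨a, ha1, ha⟩ := exists_alpha1_le_of_lt_one fun i => (hA i).1
  have hπ := measurable_piPlus (t := t) ha ha1
  have himage : MeasurableSet (affIFS A t j '' S) :=
    ((hΛ.1.of_isClosed_subset hSc hS).image
      (lipschitzWith_affIFS ha j).continuous).isClosed.measurableSet
  rw [Measure.map_apply hπ himage, preimage_piPlus_image_affIFS hA hΛ hssc j hS,
    Measure.map_apply hπ hSc.measurableSet,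
    ← Measure.restrict_apply (measurable_shift (hπ hSc.measurableSet)),
    ← Measure.map_apply measurable_shift (hπ hSc.measurableSet), hber.map_shift_restrict,
    Measure.smul_apply, smul_eq_mul]

end SelfAffine

namespace Submodule

variable {R E F : Type*} [Ring R] [AddCommGroup E] [Module R E] [AddCommGroup F] [Module R F]
  {p q : Submodule R E}

lemma projection_eq_of_mem_of_sub_mem (hpq : IsCompl p q) {x u : E} (hu : u ∈ p)
    (hxu : x - u ∈ q) : p.projection q hpq x = u := by
  rw [← sub_add_cancel x u, map_add, projection_apply_of_mem_right hpq hxu,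
    projection_apply_of_mem_left hpq hu, zero_add]

lemma projection_map_apply {p' q' : Submodule R F} (hpq : IsCompl p q) (hpq' : IsCompl p' q')
    (L : E →ₗ[R] F) (hp : p.map L ≤ p') (hq : q.map L ≤ q') (x : E) :
    p'.projection q' hpq' (L x) = L (p.projection q hpq x) :=
  projection_eq_of_mem_of_sub_mem hpq' (hp (mem_map_of_mem (projection_apply_mem hpq x)))
    (by rw [← map_sub]; exact hq (mem_map_of_mem (sub_projection_mem hpq x)))

end Submodule

section Transversal

variable {N : ℕ} {A : Fin N → Matrix (Fin 2) (Fin 2) ℝ} {f : Fin N → E2 → E2} {t : Fin N → E2}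
  {Λ : Set E2} {ess : (ℕ → Fin N) → Submodule ℝ E2} {es : E2 → Submodule ℝ E2}

/-- Along `e_s(x)` products of the matrices contract no faster than `α₁`, along `e_ss(i)`
exponentially faster, so the two lines cannot coincide. -/
lemma isCompl_of_isStableDirections (hA : ∀ i, (A i).det ≠ 0)
    (hess : IsStrongStableDirections A ess) (hes : IsStableDirections A f Λ es) {x : E2}
    (hx : x ∈ Λ) (i : ℕ → Fin N) : IsCompl (es x) (ess i) := by
  obtain ⟨hess1, -, C, -, δ, hδ, hcontr⟩ := hess
  obtain ⟨hes1, -, c, hc, hlow⟩ := hes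
  refine (Submodule.isCompl_iff_disjoint _ _ (by simp [hes1 x hx, hess1 i])).2
    (Submodule.disjoint_def.2 fun v hvs hvss => ?_)
  by_contra hv
  have hlim : Tendsto (fun n : ℕ => C * Real.exp (-δ * n)) atTop (𝓝 0) := by
    simpa using (Real.tendsto_exp_atBot.comp
      (tendsto_natCast_atTop_atTop.const_mul_atTop_of_neg (neg_neg_of_pos hδ))).const_mul C
  obtain ⟨n, hn⟩ := (hlim.eventually_lt_const hc).exists
  have hpos : 0 < alpha1 (prodRev A i n) * ‖v‖ :=
    mul_pos (alpha1_pos_of_det_ne_zero (det_listProd_ne_zero hA _)) (norm_pos_iff.2 hv)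
  have hle : c * alpha1 (prodRev A i n) * ‖v‖ ≤
      C * Real.exp (-δ * n) * alpha1 (prodRev A i n) * ‖v‖ :=
    (hlow x hx _ v hvs).trans (hcontr i n v hvss)
  nlinarith [mul_lt_mul_of_pos_right hn hpos]

lemma transBall_eq_setOf {x : E2} {i : ℕ → Fin N} (h : IsCompl (es x) (ess i)) (δ : ℝ) :
    transBall Λ ess es δ x i =
      {z ∈ Λ | ‖(es x).projection (ess i) h (x - z)‖ ≤ δ} := by
  have hproj {y w : E2} (hw : w ∈ es x) (hwy : w - y ∈ ess i) :
      (es x).projection (ess i) h y = w :=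
    Submodule.projection_eq_of_mem_of_sub_mem h hw (by simpa using neg_mem hwy)
  have hsub (y : E2) : (es x).projection (ess i) h y - y ∈ ess i := by
    simpa using neg_mem (Submodule.sub_projection_mem h y)
  ext z
  refine and_congr_right fun _ => ⟨?_, fun hz => ⟨_, _, Submodule.projection_apply_mem h x,
    Submodule.projection_apply_mem h z, hsub x, hsub z, by rwa [← map_sub]⟩⟩
  rintro ⟨w₁, w₂, hw₁, hw₂, hw₁x, hw₂z, hd⟩
  rwa [map_sub, hproj hw₁ hw₁x, hproj hw₂ hw₂z]

lemma isClosed_transBall (hΛ : IsClosed Λ) {x : E2} {i : ℕ → Fin N}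
    (h : IsCompl (es x) (ess i)) (δ : ℝ) : IsClosed (transBall Λ ess es δ x i) := by
  rw [transBall_eq_setOf h]
  exact hΛ.inter (isClosed_le (((es x).projection (ess i) h).continuous_of_finiteDimensional.comp
    (continuous_const.sub continuous_id)).norm continuous_const)

lemma exists_unit_forall_eq_smul {ℓ : Submodule ℝ E2} (hℓ : Module.finrank ℝ ℓ = 1) :
    ∃ u ∈ ℓ, ‖u‖ = 1 ∧ ∀ v ∈ ℓ, ∃ c : ℝ, v = c • u := by
  obtain ⟨⟨u, hu⟩, hu0, hspan⟩ := finrank_eq_one_iff'.1 hℓ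
  have hu0 : u ≠ 0 := by simpa using hu0
  refine ⟨‖u‖⁻¹ • u, ℓ.smul_mem _ hu, norm_smul_inv_norm hu0, fun v hv => ?_⟩
  obtain ⟨c, hc⟩ := hspan ⟨v, hv⟩
  refine ⟨c * ‖u‖, ?_⟩
  rw [smul_smul, mul_assoc, mul_inv_cancel₀ (norm_ne_zero_iff.2 hu0), mul_one]
  exact (congrArg Subtype.val hc).symm

lemma norm_toEuclideanCLM_eq_normOnLine_mul {ℓ : Submodule ℝ E2} (hℓ : Module.finrank ℝ ℓ = 1)
    (B : Matrix (Fin 2) (Fin 2) ℝ) {v : E2} (hv : v ∈ ℓ) :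
    ‖toEuclideanCLM (𝕜 := ℝ) B v‖ = normOnLine B ℓ * ‖v‖ := by
  obtain ⟨u, huℓ, hu1, hspan⟩ := exists_unit_forall_eq_smul hℓ
  have hscale : ∀ w ∈ ℓ, ‖toEuclideanCLM (𝕜 := ℝ) B w‖ = ‖toEuclideanCLM (𝕜 := ℝ) B u‖ * ‖w‖ := by
    intro w hw
    obtain ⟨c, rfl⟩ := hspan w hw
    rw [map_smul, norm_smul, norm_smul, hu1, mul_one, mul_comm]
  have hunit : {r : ℝ | ∃ w ∈ ℓ, ‖w‖ = 1 ∧ r = ‖toE2 (B.mulVec w)‖} =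
      {‖toEuclideanCLM (𝕜 := ℝ) B u‖} := by
    ext r
    refine ⟨fun ⟨w, hw, hw1, hr⟩ => ?_, fun hr => ⟨u, huℓ, hu1, hr⟩⟩
    rw [hr, mem_singleton_iff, toE2_mulVec, hscale w hw, hw1, mul_one]
  rw [hscale v hv, normOnLine, hunit, csSup_singleton]

lemma normOnLine_pos {ℓ : Submodule ℝ E2} (hℓ : Module.finrank ℝ ℓ = 1)
    {B : Matrix (Fin 2) (Fin 2) ℝ} (hB : B.det ≠ 0) : 0 < normOnLine B ℓ := by
  obtain ⟨u, huℓ, hu1, -⟩ := exists_unit_forall_eq_smul hℓ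
  have hu0 : u ≠ 0 := norm_ne_zero_iff.1 (hu1.symm ▸ one_ne_zero)
  have := norm_toEuclideanCLM_eq_normOnLine_mul hℓ B huℓ
  rw [hu1, mul_one] at this
  exact this ▸ norm_pos_iff.2 fun h => hu0 (toEuclideanCLM_injective_of_det_ne_zero hB
    (h.trans (map_zero _).symm))

lemma transBall_inter_image_affIFS (hA : ∀ i, (A i).det ≠ 0)
    (hΛ : ∀ i, MapsTo (affIFS A t i) Λ Λ) (hess : IsStrongStableDirections A ess)
    (hes : IsStableDirections A (affIFS A t) Λ es) {x' : E2} (hx' : x' ∈ Λ) (i : ℕ → Fin N)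
    (j : Fin N) (δ : ℝ) :
    transBall Λ ess es δ (affIFS A t j x') i ∩ affIFS A t j '' Λ =
      affIFS A t j '' transBall Λ ess es (δ / normOnLine (A j) (es x')) x' (consW j i) := by
  have h := isCompl_of_isStableDirections hA hess hes (hΛ j hx') i
  have h' := isCompl_of_isStableDirections hA hess hes hx' (consW j i)
  have hn := normOnLine_pos (hes.1 x' hx') (hA j)
  have hdist (z' : E2) :
      ‖(es _).projection (ess i) h (affIFS A t j x' - affIFS A t j z')‖ =
        normOnLine (A j) (es x') * ‖(es x').projection (ess (consW j i)) h' (x' - z')‖ := by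
    have hmap := Submodule.projection_map_apply h' h
      (toEuclideanCLM (𝕜 := ℝ) (A j) : E2 →ₗ[ℝ] E2) (hes.2.1 j x' hx').le
      (hess.2.1 (consW j i)).le (x' - z')
    rw [ContinuousLinearMap.coe_coe] at hmap
    rw [affIFS_sub_affIFS, hmap]
    exact norm_toEuclideanCLM_eq_normOnLine_mul (hes.1 x' hx') (A j)
      (Submodule.projection_apply_mem h' _)
  rw [transBall_eq_setOf h, transBall_eq_setOf h']
  ext z
  constructor
  · rintro ⟨⟨-, hz⟩, z', hz', rfl⟩
    exact ⟨z', ⟨hz', by rwa [le_div_iff₀ hn, mul_comm, ← hdist]⟩, rfl⟩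
  · rintro ⟨z', ⟨hz', hd⟩, rfl⟩
    exact ⟨⟨hΛ j hz', by rwa [hdist, ← le_div_iff₀' hn]⟩, z', hz', rfl⟩

end Transversal

theorem statement8_general
    {N : ℕ} (A : Fin N → Matrix (Fin 2) (Fin 2) ℝ)
    (hA : ∀ i, alpha1 (A i) < 1 ∧ (A i).det ≠ 0)
    (t : Fin N → E2) (Λ : Set E2) (hΛ : IsAttractor (affIFS A t) Λ)
    (p : Fin N → ℝ)
    (ν : Measure (ℕ → Fin N)) (hber : IsBernoulli p ν)
    (μ : Measure E2) (hμ : μ = ν.map (piPlus A t))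
    (ess : (ℕ → Fin N) → Submodule ℝ E2) (hess : IsStrongStableDirections A ess)
    (es : E2 → Submodule ℝ E2) (hes : IsStableDirections A (affIFS A t) Λ es)
    (hssc : SSC (affIFS A t)) :
    ∀ x ∈ Λ, ∀ (i : ℕ → Fin N), ∀ δ > (0:ℝ), ∀ (j : Fin N), ∀ x' ∈ Λ,
      x = affIFS A t j x' →
      μ (transBall Λ ess es δ x i ∩ (affIFS A t j '' Λ)) =
        ENNReal.ofReal (p j) *
          μ (transBall Λ ess es (δ / normOnLine (A j) (es x')) x' (consW j i)) := by
  rintro x - i δ - j x' hx' rfl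
  have hdet : ∀ k, (A k).det ≠ 0 := fun k => (hA k).2
  have hT := isCompl_of_isStableDirections hdet hess hes hx' (consW j i)
  rw [transBall_inter_image_affIFS hdet hΛ.mapsTo hess hes hx' i j δ, hμ,
    map_piPlus_image_affIFS hA hΛ hssc hber j (isClosed_transBall hΛ.1.isClosed hT _)
      fun _ hz => hz.1]

/-- **Lemma.** Under dominated splitting and strong separation, for every `x ∈ Λ`,
`i ∈ Σ⁺` and `δ > 0`, writing `j` for the unique symbol with `x ∈ f_j(Λ)` and
`x' = f_j⁻¹(x)`, one has
`μ(B^T_δ(x,i) ∩ f_j(Λ)) = p_j · μ(B^T_{δ/‖A_j|e_s(x')‖}(x', ji))`. -/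
theorem statement8
    {N : ℕ} (A : Fin N → Matrix (Fin 2) (Fin 2) ℝ)
    (hA : ∀ i, alpha1 (A i) < 1 ∧ (A i).det ≠ 0)
    (t : Fin N → E2) (Λ : Set E2) (hΛ : IsAttractor (affIFS A t) Λ)
    (p : Fin N → ℝ) (hp : ∀ i, 0 < p i) (hp1 : ∑ i, p i = 1)
    (ν : Measure (ℕ → Fin N)) (hνP : IsProbabilityMeasure ν) (hber : IsBernoulli p ν)
    (μ : Measure E2) (hμ : μ = ν.map (piPlus A t))
    (ess : (ℕ → Fin N) → Submodule ℝ E2) (hess : IsStrongStableDirections A ess)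
    (es : E2 → Submodule ℝ E2) (hes : IsStableDirections A (affIFS A t) Λ es)
    (hds : DominatedSplitting A) (hssc : SSC (affIFS A t)) :
    ∀ x ∈ Λ, ∀ (i : ℕ → Fin N), ∀ δ > (0:ℝ), ∀ (j : Fin N), ∀ x' ∈ Λ,
      x = affIFS A t j x' →
      μ (transBall Λ ess es δ x i ∩ (affIFS A t j '' Λ)) =
        ENNReal.ofReal (p j) *
          μ (transBall Λ ess es (δ / normOnLine (A j) (es x')) x' (consW j i)) :=
  statement8_general A hA t Λ hΛ p ν hber μ hμ ess hess es hes hssc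

end
end

section
/- Suppose each A_i is lower triangular, A_i = [[a_i, 0],[b_i, c_i]] with 0 < |a_i|, |c_i| < 1. If either |a_i| > |c_i| for every i = 1,…,N, or |a_i| < |c_i| for every i = 1,…,N, then 𝒜 = {A_1,…,A_N} satisfies the dominated splitting condition. -/
open MeasureTheory Filter Metric Set
open scoped ENNReal Topology NNReal

noncomputable section

/-!
For lower triangular matrices the diagonal of a product is the product of the diagonals, so for
`B = A_{w₁} ⋯ A_{wₙ}` one has `|B₀₀| = ∏ |a_{wₖ}|`, `|B₁₁| = ∏ |c_{wₖ}|` and `|det B| = |B₀₀| |B₁₁|`.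
Since `α₁/α₂ = α₁² / |det B|` and `α₁` dominates every entry, `α₁/α₂ ≥ |B₀₀| / |B₁₁|` and
`α₁/α₂ ≥ |B₁₁| / |B₀₀|`. Under either hypothesis one of these ratios is a product of `n`
factors, each at least the smallest one `s > 1`, hence it is at least `sⁿ`.
-/

theorem exists_gt_forall_le_of_finite {ι α : Type*} [Finite ι] [LinearOrder α] [NoMaxOrder α]
    {a : α} (f : ι → α) (hf : ∀ i, a < f i) : ∃ s, a < s ∧ ∀ i, s ≤ f i := by
  cases isEmpty_or_nonempty ι
  · obtain ⟨s, hs⟩ := exists_gt a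
    exact ⟨s, hs, isEmptyElim⟩
  · obtain ⟨i₀, hi₀⟩ := Finite.exists_min f
    exact ⟨f i₀, hf i₀, hi₀⟩

theorem List.pow_length_le_prod_map {ι R : Type*} [CommSemiring R] [PartialOrder R]
    [IsOrderedRing R] {s : R} (f : ι → R) (hs : 0 ≤ s) (hf : ∀ i, s ≤ f i) (w : List ι) :
    s ^ w.length ≤ (w.map f).prod := by
  induction w with
  | nil => simp
  | cons i w ih =>
    rw [List.map_cons, List.prod_cons, List.length_cons, pow_succ']
    exact mul_le_mul (hf i) ih (pow_nonneg hs _) (hs.trans (hf i))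

theorem List.prod_map_abs_div_abs {ι K : Type*} [Field K] [LinearOrder K] [IsStrictOrderedRing K]
    (x y : ι → K) (w : List ι) :
    (w.map fun i => |x i| / |y i|).prod = |(w.map x).prod| / |(w.map y).prod| := by
  induction w with
  | nil => simp
  | cons i w ih => simp [ih, abs_mul, mul_div_mul_comm]

namespace Matrix

variable {m R : Type*} [Fintype m] [LinearOrder m] [CommRing R]

theorem IsLowerTriangular.mul_apply_self {M N : Matrix m m R} (hM : M.IsLowerTriangular)
    (hN : N.IsLowerTriangular) (k : m) : (M * N) k k = M k k * N k k := by
  rw [mul_apply, Finset.sum_eq_single k]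
  · intro j _ hjk
    rcases hjk.lt_or_gt with h | h
    · rw [hN h, mul_zero]
    · rw [hM h, zero_mul]
  · simp

theorem IsLowerTriangular.list_prod [DecidableEq m] (l : List (Matrix m m R))
    (hl : ∀ M ∈ l, M.IsLowerTriangular) :
    l.prod.IsLowerTriangular ∧ ∀ k, l.prod k k = (l.map fun M => M k k).prod := by
  induction l with
  | nil => exact ⟨blockTriangular_one, fun k => by simp⟩
  | cons M l ih =>
    obtain ⟨hl_tri, hl_diag⟩ := ih fun N hN => hl N (List.mem_cons_of_mem M hN)
    have hM := hl M List.mem_cons_self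
    refine ⟨hM.mul hl_tri, fun k => ?_⟩
    rw [List.prod_cons, hM.mul_apply_self hl_tri, hl_diag, List.map_cons, List.prod_cons]

end Matrix

theorem abs_apply_le_alpha1 (B : Matrix (Fin 2) (Fin 2) ℝ) (i j : Fin 2) : |B i j| ≤ alpha1 B := by
  have hcol : Matrix.toEuclideanLin B (EuclideanSpace.single j 1) i = B i j := by
    simp [Matrix.toLpLin_apply, Matrix.mulVec_single]
  calc |B i j| = ‖Matrix.toEuclideanLin B (EuclideanSpace.single j 1) i‖ := by
        rw [hcol, Real.norm_eq_abs]
    _ ≤ ‖Matrix.toEuclideanLin B (EuclideanSpace.single j 1)‖ := PiLp.norm_apply_le _ _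
    _ ≤ alpha1 B * ‖(EuclideanSpace.single j 1 : E2)‖ :=
        (LinearMap.toContinuousLinearMap (Matrix.toEuclideanLin B)).le_opNorm _
    _ = alpha1 B := by simp

theorem alpha1_div_alpha2 (B : Matrix (Fin 2) (Fin 2) ℝ) :
    alpha1 B / alpha2 B = alpha1 B ^ 2 / |B.det| := by
  rw [alpha2, div_div_eq_mul_div, sq]

theorem abs_div_abs_le_alpha1_div_alpha2 {B : Matrix (Fin 2) (Fin 2) ℝ}
    (hB : B.IsLowerTriangular) {k l : Fin 2} (hkl : k ≠ l) :
    |B k k| / |B l l| ≤ alpha1 B / alpha2 B := by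
  have hdet : |B.det| = |B k k| * |B l l| := by
    rw [Matrix.det_of_isLowerTriangular B hB, ← abs_mul]
    fin_cases k <;> fin_cases l <;> simp_all [Fin.prod_univ_two, mul_comm]
  rw [alpha1_div_alpha2, hdet]
  rcases eq_or_ne (B k k) 0 with hk | hk
  · rw [hk, abs_zero, zero_div]
    positivity
  calc |B k k| / |B l l| = |B k k| ^ 2 / (|B k k| * |B l l|) := by
        rw [sq, mul_div_mul_left _ _ (abs_ne_zero.mpr hk)]
    _ ≤ alpha1 B ^ 2 / (|B k k| * |B l l|) := by
        gcongr
        exact abs_apply_le_alpha1 B k k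

theorem prod_diag_ratio_le_alpha1_div_alpha2 {N : ℕ} {A : Fin N → Matrix (Fin 2) (Fin 2) ℝ}
    (hA : ∀ i, (A i).IsLowerTriangular) {k l : Fin 2} (hkl : k ≠ l) (w : List (Fin N)) :
    (w.map fun i => |A i k k| / |A i l l|).prod ≤
      alpha1 (listProd A w) / alpha2 (listProd A w) := by
  obtain ⟨htri, hdiag⟩ := Matrix.IsLowerTriangular.list_prod (w.map A)
    (by simpa using fun i _ => hA i)
  have hdiag' : ∀ k, listProd A w k k = (w.map fun i => A i k k).prod := fun k => by
    rw [listProd, hdiag, List.map_map]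
    rfl
  rw [List.prod_map_abs_div_abs, ← hdiag', ← hdiag']
  exact abs_div_abs_le_alpha1_div_alpha2 htri hkl

theorem dominatedSplitting_of_one_lt_le_prod {N : ℕ} (A : Fin N → Matrix (Fin 2) (Fin 2) ℝ)
    (f : Fin N → ℝ) (hf : ∀ i, 1 < f i)
    (hA : ∀ w, (w.map f).prod ≤ alpha1 (listProd A w) / alpha2 (listProd A w)) :
    DominatedSplitting A := by
  obtain ⟨s, hs, hsf⟩ := exists_gt_forall_le_of_finite f hf
  refine ⟨1, one_pos, Real.log s, Real.log_pos hs, fun w => ?_⟩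
  calc 1 * Real.exp (Real.log s * w.length) = s ^ w.length := by
        rw [one_mul, mul_comm, Real.exp_nat_mul, Real.exp_log (by positivity)]
    _ ≤ (w.map f).prod := List.pow_length_le_prod_map f (by positivity) hsf w
    _ ≤ _ := hA w

theorem statement13_general
    {N : ℕ} (a b c : Fin N → ℝ)
    (ha : ∀ i, 0 < |a i| ∧ |a i| < 1) (hc : ∀ i, 0 < |c i| ∧ |c i| < 1)
    (A : Fin N → Matrix (Fin 2) (Fin 2) ℝ)
    (hAdef : ∀ i, A i = !![a i, 0; b i, c i])
    (h : (∀ i, |c i| < |a i|) ∨ (∀ i, |a i| < |c i|)) :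
    DominatedSplitting A := by
  have hA : ∀ i, (A i).IsLowerTriangular := fun i i₀ j₀ hij => by
    change i₀ < j₀ at hij
    fin_cases i₀ <;> fin_cases j₀ <;> simp [hAdef] at hij ⊢
  rcases h with h | h
  · refine dominatedSplitting_of_one_lt_le_prod A _ (fun i => ?_)
      (prod_diag_ratio_le_alpha1_div_alpha2 hA (k := 0) (l := 1) (by decide))
    simpa [hAdef, one_lt_div (hc i).1] using h i
  · refine dominatedSplitting_of_one_lt_le_prod A _ (fun i => ?_)
      (prod_diag_ratio_le_alpha1_div_alpha2 hA (k := 1) (l := 0) (by decide))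
    simpa [hAdef, one_lt_div (ha i).1] using h i

/-- **Lemma.** A family of contracting, non-singular lower triangular matrices
`A_i = [[a_i, 0], [b_i, c_i]]` satisfies the dominated splitting condition if either
`|a_i| > |c_i|` for every `i`, or `|a_i| < |c_i|` for every `i`. -/
theorem statement13
    {N : ℕ} (a b c : Fin N → ℝ)
    (ha : ∀ i, 0 < |a i| ∧ |a i| < 1) (hc : ∀ i, 0 < |c i| ∧ |c i| < 1)
    (A : Fin N → Matrix (Fin 2) (Fin 2) ℝ)
    (hAdef : ∀ i, A i = !![a i, 0; b i, c i])
    (hcontr : ∀ i, alpha1 (A i) < 1)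
    (h : (∀ i, |c i| < |a i|) ∨ (∀ i, |a i| < |c i|)) :
    DominatedSplitting A :=
  statement13_general a b c ha hc A hAdef h
end
end
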